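/- Let i be a position of string T of length n such that the maximal even palindrome centered at i is u·uᴿ, and suppose wᴿ is the longest nonempty prefix of T[i+|u|+1..n] such that w occurs in T[1..i−|u|−1]. Then for any SAGP w'·g'·u'·u'ᴿ·w'ᴿ for pivot i with |u'| < |u|, one has |w'u'| ≤ |wu|. (In particular, no SAGP for pivot i with a strictly shorter palindrome part can have a strictly longer arm.) -/

import Mathlib

/-- 1-based substring T[b..e]. -/
def sub (T : List Char) (b e : ℕ) : List Char := (T.drop (b-1)).take (e+1-b)

/-- The string x occurs in T beginning at 1-based position p. -/
def occursAt (T x : List Char) (p : ℕ) : Prop := x <+: T.drop (p-1)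

/-- T has an even palindrome of radius r centered at position i (i.e. T[i-r+1..i+r] is a palindrome). -/
def evenPalAt (T : List Char) (i r : ℕ) : Prop :=
  r ≤ i ∧ i + r ≤ T.length ∧ (sub T (i-r+1) (i+r)).reverse = sub T (i-r+1) (i+r)

/-- The SAGP w·g·u·uᴿ·wᴿ (w, g, u nonempty) occurs in T with pivot i. -/
def SAGPat (T : List Char) (i : ℕ) (w g u : List Char) : Prop :=
  w ≠ [] ∧ g ≠ [] ∧ u ≠ [] ∧ ∃ b, 1 ≤ b ∧ b + (w.length + g.length + u.length) = i + 1 ∧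
    occursAt T (w ++ g ++ u ++ u.reverse ++ w.reverse) b

/-- w·g·u·uᴿ·wᴿ is a longest SAGP for pivot i (maximal arm length |wu|). -/
def longestSAGP (T : List Char) (i : ℕ) (w g u : List Char) : Prop :=
  SAGPat T i w g u ∧ ∀ w' g' u', SAGPat T i w' g' u' → w'.length + u'.length ≤ w.length + u.length

/-- w·g·u·uᴿ·wᴿ is a canonical longest SAGP for pivot i (moreover |u| maximal among longest). -/
def canonSAGP (T : List Char) (i : ℕ) (w g u : List Char) : Prop :=
  longestSAGP T i w g u ∧ ∀ w' g' u', longestSAGP T i w' g' u' → u'.length ≤ u.length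

/-- Position i is of type-1: some SAGP for pivot i has u·uᴿ equal to the maximal even palindrome centered at i. -/
def type1 (T : List Char) (i : ℕ) : Prop :=
  ∃ w g u, SAGPat T i w g u ∧ ∀ r, evenPalAt T i r → r ≤ u.length

/-!
If |w'u'| > |wu| with |u'| < |u|, cut the right arm w'ᴿ of the SAGP at position i + |u|: the part
beyond it is a prefix of T[i+|u|+1..n] of length |w'u'| − |u| > |w|, and its reverse is a prefix
of the left arm w', hence occurs in T[1..i−|u|−1]. This contradicts the choice of w.
-/

/-- `v` is a prefix of `T[i+k+1..n]` and `vᴿ` occurs in `T[1..i-k-1]`. -/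
def IsRightArm (T : List Char) (i k : ℕ) (v : List Char) : Prop :=
  v <+: T.drop (i + k) ∧ ∃ p, 1 ≤ p ∧ p + v.length ≤ i - k ∧ occursAt T v.reverse p

theorem occursAt.take {T x : List Char} {p : ℕ} (h : occursAt T x p) (n : ℕ) :
    occursAt T (x.take n) p :=
  (List.take_prefix n x).trans h

namespace SAGPat

variable {T : List Char} {i : ℕ} {w g u : List Char}

theorem reverse_prefix_drop (h : SAGPat T i w g u) : w.reverse <+: T.drop (i + u.length) := by
  obtain ⟨-, -, -, b, hb, hbi, hocc⟩ := h
  have := hocc.drop (w ++ g ++ u ++ u.reverse).length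
  rw [List.drop_left, List.drop_drop] at this
  convert this using 2
  simp only [List.length_append, List.length_reverse]
  omega

theorem isRightArm_drop (h : SAGPat T i w g u) {k : ℕ} (huk : u.length ≤ k)
    (hkw : k ≤ w.length + u.length) : IsRightArm T i k (w.reverse.drop (k - u.length)) := by
  refine ⟨?_, ?_⟩
  · have := h.reverse_prefix_drop.drop (k - u.length)
    rwa [List.drop_drop, Nat.add_assoc, Nat.add_sub_cancel' huk] at this
  · obtain ⟨-, hg, -, b, hb, hbi, hocc⟩ := h
    have hg_pos : 1 ≤ g.length := List.length_pos_iff.mpr hg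
    refine ⟨b, hb, ?_, ?_⟩
    · simp only [List.length_drop, List.length_reverse]
      omega
    · have hw : occursAt T w b := List.IsPrefix.trans (by simp) hocc
      rw [List.reverse_drop, List.reverse_reverse]
      exact hw.take _

end SAGPat

theorem shorter_palindrome_no_longer_arm_general (T : List Char) (i : ℕ) (u w : List Char)
    (hwlong : ∀ v : List Char, v ≠ [] → v <+: T.drop (i + u.length) →
       (∃ p, 1 ≤ p ∧ p + v.length ≤ i - u.length ∧ occursAt T v.reverse p) →
       v.length ≤ w.length) :
    ∀ w' g' u', SAGPat T i w' g' u' → u'.length < u.length →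
      w'.length + u'.length ≤ w.length + u.length := by
  intro w' g' u' h hlt
  by_contra! hlong
  obtain ⟨hpre, hocc⟩ := h.isRightArm_drop hlt.le (by omega)
  have hne : w'.reverse.drop (u.length - u'.length) ≠ [] := by
    simp only [ne_eq, List.drop_eq_nil_iff, List.length_reverse]
    omega
  have := hwlong _ hne hpre hocc
  simp only [List.length_drop, List.length_reverse] at this
  omega

/-- no SAGP for pivot i with a strictly shorter palindrome part can
have a strictly longer arm than the one built from the maximal palindrome and the
longest extendable w. -/
theorem shorter_palindrome_no_longer_arm (T : List Char) (i : ℕ) (u w : List Char)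
    (hu : evenPalAt T i u.length) (huocc : sub T (i - u.length + 1) i = u)
    (hmax : ∀ r, evenPalAt T i r → r ≤ u.length)
    (hw : w ≠ []) (hwpre : w.reverse <+: T.drop (i + u.length))
    (hwocc : ∃ p, 1 ≤ p ∧ p + w.length ≤ i - u.length ∧ occursAt T w p)
    (hwlong : ∀ v : List Char, v ≠ [] → v <+: T.drop (i + u.length) →
       (∃ p, 1 ≤ p ∧ p + v.length ≤ i - u.length ∧ occursAt T v.reverse p) →
       v.length ≤ w.length) :
    ∀ w' g' u', SAGPat T i w' g' u' → u'.length < u.length →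
      w'.length + u'.length ≤ w.length + u.length :=
  shorter_palindrome_no_longer_arm_general T i u w hwlong
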